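/- Let D ≥ 1 be an integer and let ξ : ℝ^D → ℝ be given by a power series ξ(x) = Σ_α c_α x^α over multi-indices α, with all coefficients c_α ≥ 0, absolutely convergent on ℝ^D, with ξ(0) = 0, and assume ξ is convex on ℝ_+^D. Let χ ∈ 𝔛 and t ≥ 0. Then the function S_tχ : ℝ_+^D → ℝ is ℝ_+^D-convex. -/

import Mathlib

/-!
By the Hopf formula, `S_tχ(v) = sup_{p ≥ 0} (p·v + tξ(p) − χ*(p))` with
`χ*(p) = sup_{u ≥ 0} (p·u − χ(u))`. The inequality `≤` holds because an `ε`-subgradient `p` of `χ`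
at `a` bounds `χ(a) − (tξ)*(a − v)`; `≥` holds because a nonnegative subgradient `w` of `tξ` at `p`
turns `a = v + w` into a competitor. The bracket is supermodular in `(v, p)` for the coordinatewise
order: `p·v` is, `ξ` is since each monomial `m` satisfies `m(p) + m(q) ≤ m(p ⊔ q) + m(p ⊓ q)` on the
orthant, and `χ*` is submodular since `χ` is separable. So if `p` and `q` are almost optimal at
`x + y` and `x + z`, then `p ⊔ q` and `p ⊓ q` do at least as well at `x + y + z` and `x`.
-/

open MeasureTheory
open scoped NNReal BigOperators

/-- The nonnegative orthant `ℝ_+^D` in `ℝ^D`. -/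
def orthant (D : ℕ) : Set (EuclideanSpace ℝ (Fin D)) := {x | ∀ i, 0 ≤ x i}

/-- The monotone conjugate `(tξ)*(y) = sup_{z ∈ ℝ_+^D} (z·y − tξ(z))`, valued in
`ℝ ∪ {+∞}` (formalized as `EReal`). -/
noncomputable def tConj (D : ℕ) (t : ℝ) (ξ : EuclideanSpace ℝ (Fin D) → ℝ)
    (y : EuclideanSpace ℝ (Fin D)) : EReal :=
  ⨆ z : orthant D, (((inner ℝ z.1 y : ℝ) - t * ξ z.1 : ℝ) : EReal)

/-- The Hopf–Lax value `S_tχ(x) = sup_{y ∈ ℝ_+^D} (χ(y) − (tξ)*(y−x))`, valued in `EReal`. -/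
noncomputable def hopfLax (D : ℕ) (t : ℝ) (ξ χ : EuclideanSpace ℝ (Fin D) → ℝ)
    (x : EuclideanSpace ℝ (Fin D)) : EReal :=
  ⨆ y : orthant D, ((χ y.1 : EReal) - tConj D t ξ (y.1 - x))

open Set
open scoped RealInnerProductSpace

theorem EReal.le_of_forall_pos_le_add_coe {a b : EReal}
    (h : ∀ ε : ℝ, 0 < ε → a ≤ b + ε) : a ≤ b := by
  induction b using EReal.rec with
  | bot => simpa using h 1 one_pos
  | top => exact le_top
  | coe b =>
    refine EReal.ge_of_forall_gt_iff_ge.1 fun z hz => ?_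
    have hzb : ∀ ε : ℝ, 0 < ε → z ≤ b + ε := fun ε hε => by
      exact_mod_cast hz.le.trans (h ε hε)
    exact_mod_cast le_of_forall_pos_le_add hzb

theorem add_le_add_of_mul_eq_mul {A B M m : ℝ} (hm : 0 ≤ m) (hAM : A ≤ M) (hBM : B ≤ M)
    (hmM : m * M = A * B) : A + B ≤ M + m := by
  nlinarith [mul_nonneg (sub_nonneg.2 hAM) (sub_nonneg.2 hBM)]

def SupermodularOn {α β : Type*} [Lattice α] [Add β] [LE β] (f : α → β) (s : Set α) : Prop :=
  ∀ ⦃u⦄, u ∈ s → ∀ ⦃v⦄, v ∈ s → f u + f v ≤ f (u ⊔ v) + f (u ⊓ v)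

section PowerSeries

variable {ι : Type*} [Fintype ι]

theorem supermodularOn_monomial (α : ι → ℕ) :
    SupermodularOn (fun x : ι → ℝ => ∏ i, x i ^ α i) (Ici 0) := by
  intro u hu v hv
  refine add_le_add_of_mul_eq_mul
    (Finset.prod_nonneg fun i _ => pow_nonneg (le_inf (hu i) (hv i)) _)
    (Finset.prod_le_prod (fun i _ => pow_nonneg (hu i) _)
      fun i _ => pow_le_pow_left₀ (hu i) le_sup_left _)
    (Finset.prod_le_prod (fun i _ => pow_nonneg (hv i) _)
      fun i _ => pow_le_pow_left₀ (hv i) le_sup_right _) ?_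
  rw [← Finset.prod_mul_distrib, ← Finset.prod_mul_distrib]
  refine Finset.prod_congr rfl fun i _ => ?_
  rw [← mul_pow, ← mul_pow]
  exact congrArg (· ^ α i) (min_mul_max (u i) (v i))

variable {c : (ι → ℕ) → ℝ}

theorem monotoneOn_tsum_monomial (hc : ∀ α, 0 ≤ c α)
    (hsum : ∀ x : ι → ℝ, Summable fun α => c α * ∏ i, x i ^ α i) :
    MonotoneOn (fun x : ι → ℝ => ∑' α, c α * ∏ i, x i ^ α i) (Ici 0) :=
  fun u hu v _ huv => (hsum u).tsum_le_tsum (fun α => mul_le_mul_of_nonneg_left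
    (Finset.prod_le_prod (fun i _ => pow_nonneg (hu i) _)
      fun i _ => pow_le_pow_left₀ (hu i) (huv i) _) (hc α)) (hsum v)

theorem supermodularOn_tsum_monomial (hc : ∀ α, 0 ≤ c α)
    (hsum : ∀ x : ι → ℝ, Summable fun α => c α * ∏ i, x i ^ α i) :
    SupermodularOn (fun x : ι → ℝ => ∑' α, c α * ∏ i, x i ^ α i) (Ici 0) := by
  intro u hu v hv
  dsimp only
  rw [← (hsum u).tsum_add (hsum v), ← (hsum _).tsum_add (hsum _)]
  refine Summable.tsum_le_tsum (fun α => ?_) ((hsum u).add (hsum v)) ((hsum _).add (hsum _))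
  rw [← mul_add, ← mul_add]
  exact mul_le_mul_of_nonneg_left (supermodularOn_monomial α hu hv) (hc α)

end PowerSeries

theorem ConvexOn.slope_mul_le_sub {S : Set ℝ} {h : ℝ → ℝ} (hf : ConvexOn ℝ S h)
    (hmono : MonotoneOn h S) {a ε s : ℝ} (ha : a ∈ S) (haε : a + ε ∈ S) (hs : s ∈ S)
    (hε : 0 < ε) : (h (a + ε) - h a) / ε * (s - (a + ε)) ≤ h s - h a := by
  have hstep : h a ≤ h (a + ε) := hmono ha haε (by linarith)
  have hp : 0 ≤ (h (a + ε) - h a) / ε := div_nonneg (sub_nonneg.2 hstep) hε.le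
  rcases lt_or_ge s a with hsa | has
  · have := hf.slope_mono_adjacent hs haε hsa (by linarith : a < a + ε)
    rw [add_sub_cancel_left, div_le_iff₀ (sub_pos.2 hsa)] at this
    nlinarith
  rcases le_or_gt s (a + ε) with hsε | hsε
  · nlinarith [hmono ha hs has]
  · have := hf.slope_mono_adjacent ha hs (by linarith : a < a + ε) hsε
    rw [add_sub_cancel_left, le_div_iff₀ (sub_pos.2 hsε)] at this
    linarith

theorem ConvexOn.exists_subgradient {E : Type*} [AddCommGroup E] [TopologicalSpace E]
    [IsTopologicalAddGroup E] [Module ℝ E] [ContinuousSMul ℝ E] [LocallyConvexSpace ℝ E]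
    {f : E → ℝ} (hf : ConvexOn ℝ univ f) (hcont : Continuous f) (x : E) :
    ∃ ℓ : StrongDual ℝ E, ∀ y, f x + ℓ (y - x) ≤ f y := by
  have hconvex : Convex ℝ {p : E × ℝ | f p.1 < p.2} := by
    simpa using hf.convex_strict_epigraph
  have hopen : IsOpen {p : E × ℝ | f p.1 < p.2} :=
    isOpen_lt (hcont.comp continuous_fst) continuous_snd
  obtain ⟨g, hg⟩ := geometric_hahn_banach_point_open hconvex hopen (x := (x, f x))
    (lt_irrefl (f x))
  set κ := g (0, 1)
  have hg_apply : ∀ z s, g (z, s) = g (z, 0) + s * κ := fun z s => by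
    rw [show (z, s) = (z, 0) + s • ((0 : E), (1 : ℝ)) by simp, map_add, map_smul, smul_eq_mul]
  -- the separating hyperplane is not vertical
  have hκ : 0 < κ := by
    have := hg (x, f x + 1) (show f x < f x + 1 from lt_add_one _)
    rw [hg_apply x (f x), hg_apply x (f x + 1)] at this
    linarith
  have hsupport : ∀ y, g (x, 0) + f x * κ ≤ g (y, 0) + f y * κ := fun y =>
    le_of_forall_pos_lt_add fun δ hδ => by
      have := hg (y, f y + δ / κ) (lt_add_of_pos_right _ (div_pos hδ hκ))
      rw [hg_apply, hg_apply y] at this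
      calc _ < _ := this
        _ = g (y, 0) + f y * κ + δ := by field_simp; ring
  refine ⟨-κ⁻¹ • g.comp (ContinuousLinearMap.inl ℝ E ℝ), fun y => ?_⟩
  have hℓ : (-κ⁻¹ • g.comp (ContinuousLinearMap.inl ℝ E ℝ)) (y - x) =
      κ⁻¹ * (g (x, 0) - g (y, 0)) := by
    simp only [map_sub, smul_apply, ContinuousLinearMap.comp_apply,
      ContinuousLinearMap.inl_apply, smul_eq_mul]
    ring
  rw [hℓ, ← le_sub_iff_add_le', inv_mul_le_iff₀ hκ]
  linarith [hsupport y]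

theorem ConvexOn.exists_nonneg_subgradient {ι : Type*} [Fintype ι] {f : (ι → ℝ) → ℝ}
    (hf : ConvexOn ℝ (Ici 0) f) (hmono : MonotoneOn f (Ici 0)) {p : ι → ℝ} (hp : 0 ≤ p) :
    ∃ w : ι → ℝ, 0 ≤ w ∧ ∀ z, 0 ≤ z → f p + w ⬝ᵥ (z - p) ≤ f z := by
  classical
  -- `f ∘ (· ⊔ 0)` is a convex extension of `f` to the whole space, since `f` is monotone
  set g : (ι → ℝ) → ℝ := fun u => f (u ⊔ 0)
  have hpos : ∀ u : ι → ℝ, u ⊔ 0 ∈ Ici 0 := fun u => mem_Ici.2 le_sup_right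
  have hg : ConvexOn ℝ univ g := by
    refine ⟨convex_univ, fun u _ v _ a b ha hb hab => ?_⟩
    have hle : (a • u + b • v) ⊔ 0 ≤ a • (u ⊔ 0) + b • (v ⊔ 0) :=
      sup_le (add_le_add (smul_le_smul_of_nonneg_left le_sup_left ha)
          (smul_le_smul_of_nonneg_left le_sup_left hb))
        (add_nonneg (smul_nonneg ha le_sup_right) (smul_nonneg hb le_sup_right))
    calc g (a • u + b • v) ≤ f (a • (u ⊔ 0) + b • (v ⊔ 0)) :=
          hmono (hpos _) (hf.1 (hpos u) (hpos v) ha hb hab) hle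
      _ ≤ a • g u + b • g v := hf.2 (hpos u) (hpos v) ha hb hab
  obtain ⟨ℓ, hℓ⟩ := hg.exists_subgradient (continuousOn_univ.1 (hg.continuousOn isOpen_univ)) p
  have hgf : ∀ z, 0 ≤ z → g z = f z := fun z hz => by simp only [g, sup_eq_left.2 hz]
  set e : ι → ι → ℝ := fun i j => if i = j then 1 else 0
  have hℓ_apply : ∀ u, ℓ u = (fun i => ℓ (e i)) ⬝ᵥ u := fun u => by
    simpa [dotProduct, mul_comm] using (ℓ : (ι → ℝ) →ₗ[ℝ] ℝ).pi_apply_eq_sum_univ u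
  refine ⟨fun i => ℓ (e i), fun i => ?_, fun z hz => ?_⟩
  · have he : 0 ≤ e i := fun j => by simp only [e]; split_ifs <;> norm_num
    have hdescent : g (p - e i) ≤ g p :=
      hmono (hpos _) (hpos p) (sup_le_sup_right (sub_le_self p he) 0)
    have := hℓ (p - e i)
    rw [sub_sub_cancel_left, map_neg] at this
    show 0 ≤ ℓ (e i)
    linarith
  · have := hℓ z
    rwa [hgf z hz, hgf p hp, hℓ_apply] at this

theorem EuclideanSpace.real_inner_eq_sum {ι : Type*} [Fintype ι] (x y : EuclideanSpace ℝ ι) :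
    ⟪x, y⟫ = ∑ i, x i * y i := by
  simp [PiLp.inner_apply, mul_comm]

section HopfLax

variable {D : ℕ} {t : ℝ} {ξ χ : EuclideanSpace ℝ (Fin D) → ℝ}

theorem add_mem_orthant {x y : EuclideanSpace ℝ (Fin D)} (hx : x ∈ orthant D)
    (hy : y ∈ orthant D) : x + y ∈ orthant D :=
  fun i => add_nonneg (hx i) (hy i)

/-- Hopf formula: `hopfLax D t ξ χ v = ⨆ p ∈ orthant D, ⨅ u ∈ orthant D, hopfDual D t ξ χ v p u`. -/
noncomputable def hopfDual (D : ℕ) (t : ℝ) (ξ χ : EuclideanSpace ℝ (Fin D) → ℝ)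
    (v p u : EuclideanSpace ℝ (Fin D)) : ℝ :=
  ⟪p, v⟫ + t * ξ p - (⟪p, u⟫ - χ u)

theorem le_tConj {p : EuclideanSpace ℝ (Fin D)} (hp : p ∈ orthant D)
    (y : EuclideanSpace ℝ (Fin D)) :
    ((⟪p, y⟫ - t * ξ p : ℝ) : EReal) ≤ tConj D t ξ y :=
  le_iSup (fun z : orthant D => ((⟪z.1, y⟫ - t * ξ z.1 : ℝ) : EReal)) ⟨p, hp⟩

theorem exists_tConj_le (ht : 0 ≤ t) (hconv : ConvexOn ℝ (orthant D) ξ)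
    (hmono : MonotoneOn (ξ ∘ WithLp.toLp 2) (Ici 0)) {p : EuclideanSpace ℝ (Fin D)}
    (hp : p ∈ orthant D) :
    ∃ w ∈ orthant D, tConj D t ξ w ≤ ((⟪p, w⟫ - t * ξ p : ℝ) : EReal) := by
  have hconv' : ConvexOn ℝ (Ici 0) (ξ ∘ WithLp.toLp 2) := by
    refine ⟨convex_Ici 0, fun u hu v hv a b ha hb hab => ?_⟩
    simpa only [Function.comp, WithLp.toLp_add, WithLp.toLp_smul] using
      hconv.2 (x := WithLp.toLp 2 u) (y := WithLp.toLp 2 v) (fun i => hu i) (fun i => hv i)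
        ha hb hab
  have hmono' : MonotoneOn (fun u => t • (ξ ∘ WithLp.toLp 2) u) (Ici 0) :=
    fun u hu v hv huv => smul_le_smul_of_nonneg_left (hmono hu hv huv) ht
  obtain ⟨w, hw, hsub⟩ := (hconv'.smul ht).exists_nonneg_subgradient hmono' (p := p.ofLp) hp
  refine ⟨WithLp.toLp 2 w, hw, iSup_le fun ⟨z, hz⟩ => EReal.coe_le_coe_iff.2 ?_⟩
  have := hsub z.ofLp hz
  simp only [Function.comp_apply, WithLp.toLp_ofLp, smul_eq_mul, dotProduct, Pi.sub_apply,
    Finset.sum_sub_distrib, mul_comm (w _), sub_mul] at this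
  simp only [EuclideanSpace.real_inner_eq_sum]
  linarith

theorem exists_hopfDual_le_hopfLax (ht : 0 ≤ t) (hconv : ConvexOn ℝ (orthant D) ξ)
    (hmono : MonotoneOn (ξ ∘ WithLp.toLp 2) (Ici 0)) {v p : EuclideanSpace ℝ (Fin D)}
    (hv : v ∈ orthant D) (hp : p ∈ orthant D) :
    ∃ u ∈ orthant D, (hopfDual D t ξ χ v p u : EReal) ≤ hopfLax D t ξ χ v := by
  obtain ⟨w, hw, hw_le⟩ := exists_tConj_le ht hconv hmono hp
  have hvw := add_mem_orthant hv hw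
  refine ⟨v + w, hvw, ?_⟩
  calc (hopfDual D t ξ χ v p (v + w) : EReal)
      = (χ (v + w) : EReal) - ((⟪p, w⟫ - t * ξ p : ℝ) : EReal) := by
        rw [← EReal.coe_sub, hopfDual, inner_add_right]
        ring_nf
    _ ≤ (χ (v + w) : EReal) - tConj D t ξ (v + w - v) := by
        rw [add_sub_cancel_left]
        exact EReal.sub_le_sub le_rfl hw_le
    _ ≤ hopfLax D t ξ χ v :=
        le_iSup (fun y : orthant D => (χ y.1 : EReal) - tConj D t ξ (y.1 - v)) ⟨v + w, hvw⟩

theorem hopfLax_term_le_hopfDual {a v p u : EuclideanSpace ℝ (Fin D)} {ε : ℝ}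
    (hp : p ∈ orthant D) (hpa : ⟪p, u⟫ - χ u ≤ ⟪p, a⟫ - χ a + ε) :
    (χ a : EReal) - tConj D t ξ (a - v) ≤ ((hopfDual D t ξ χ v p u + ε : ℝ) : EReal) :=
  calc (χ a : EReal) - tConj D t ξ (a - v)
      ≤ (χ a : EReal) - ((⟪p, a - v⟫ - t * ξ p : ℝ) : EReal) :=
        EReal.sub_le_sub le_rfl (le_tConj hp _)
    _ ≤ ((hopfDual D t ξ χ v p u + ε : ℝ) : EReal) := by
        rw [← EReal.coe_sub, EReal.coe_le_coe_iff, hopfDual, inner_sub_right]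
        linarith

theorem exists_approx_subgradient_of_separable (lam : Fin D → ℝ) (χd : Fin D → ℝ → ℝ)
    (hlam : ∀ d, 0 ≤ lam d) (hlamsum : ∑ d, lam d = 1)
    (hconv : ∀ d, ConvexOn ℝ (Ici 0) (χd d)) (hlip : ∀ d, LipschitzOnWith 1 (χd d) (Ici 0))
    (hmono : ∀ d, MonotoneOn (χd d) (Ici 0)) (hχ : ∀ x, χ x = ∑ d, lam d * χd d (x d))
    {a : EuclideanSpace ℝ (Fin D)} (ha : a ∈ orthant D) {ε : ℝ} (hε : 0 < ε) :
    ∃ p ∈ orthant D, ∀ u ∈ orthant D, ⟪p, u⟫ - χ u ≤ ⟪p, a⟫ - χ a + ε := by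
  set slope : Fin D → ℝ := fun d => (χd d (a d + ε) - χd d (a d)) / ε
  have haε : ∀ d, a d + ε ∈ Ici (0 : ℝ) := fun d => mem_Ici.2 (by linarith [ha d])
  have hslope_nonneg : ∀ d, 0 ≤ slope d := fun d =>
    div_nonneg (sub_nonneg.2 (hmono d (ha d) (haε d) (by linarith))) hε.le
  have hslope_le : ∀ d, slope d ≤ 1 := fun d => by
    refine (div_le_one hε).2 ((le_abs_self _).trans ?_)
    simpa [Real.dist_eq, abs_of_pos hε] using (hlip d).dist_le_mul _ (haε d) _ (ha d)
  refine ⟨WithLp.toLp 2 fun d => lam d * slope d, fun d => mul_nonneg (hlam d) (hslope_nonneg d),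
    fun u hu => ?_⟩
  have hchord : ∑ d, lam d * slope d * (u d - (a d + ε)) ≤ χ u - χ a := by
    rw [hχ, hχ, ← Finset.sum_sub_distrib]
    refine Finset.sum_le_sum fun d _ => ?_
    rw [mul_assoc, ← mul_sub]
    exact mul_le_mul_of_nonneg_left
      ((hconv d).slope_mul_le_sub (hmono d) (ha d) (haε d) (hu d) hε) (hlam d)
  have herror : ∑ d, lam d * slope d * ε ≤ ε := by
    calc ∑ d, lam d * slope d * ε ≤ ∑ d, lam d * ε := Finset.sum_le_sum fun d _ =>
          mul_le_mul_of_nonneg_right (mul_le_of_le_one_right (hlam d) (hslope_le d)) hε.le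
      _ = ε := by rw [← Finset.sum_mul, hlamsum, one_mul]
  simp only [EuclideanSpace.real_inner_eq_sum]
  simp only [mul_sub, mul_add, Finset.sum_sub_distrib, Finset.sum_add_distrib] at hchord
  linarith

theorem inner_add_inner_le_sup_add_inf {x y z : EuclideanSpace ℝ (Fin D)} (hy : y ∈ orthant D)
    (hz : z ∈ orthant D) (p q : EuclideanSpace ℝ (Fin D)) :
    ⟪p, x + y⟫ + ⟪q, x + z⟫ ≤
      ⟪WithLp.toLp 2 (p.ofLp ⊔ q.ofLp), x + y + z⟫ + ⟪WithLp.toLp 2 (p.ofLp ⊓ q.ofLp), x⟫ := by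
  simp only [EuclideanSpace.real_inner_eq_sum, ← Finset.sum_add_distrib]
  refine Finset.sum_le_sum fun d _ => ?_
  have hy' := mul_le_mul_of_nonneg_right (le_sup_left : p d ≤ p d ⊔ q d) (hy d)
  have hz' := mul_le_mul_of_nonneg_right (le_sup_right : q d ≤ p d ⊔ q d) (hz d)
  have hsum : (p d ⊔ q d + p d ⊓ q d) * x d = (p d + q d) * x d := by rw [max_add_min]
  simp only [PiLp.add_apply, Pi.sup_apply, Pi.inf_apply]
  linarith

theorem exists_rearrangement_of_separable (g : Fin D → ℝ → ℝ) (hχ : ∀ x, χ x = ∑ d, g d (x d))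
    (p q : EuclideanSpace ℝ (Fin D)) {u u' : EuclideanSpace ℝ (Fin D)} (hu : u ∈ orthant D)
    (hu' : u' ∈ orthant D) :
    ∃ w₁ ∈ orthant D, ∃ w₂ ∈ orthant D,
      ⟪p, w₁⟫ - χ w₁ + (⟪q, w₂⟫ - χ w₂) =
        ⟪WithLp.toLp 2 (p.ofLp ⊔ q.ofLp), u⟫ - χ u +
          (⟪WithLp.toLp 2 (p.ofLp ⊓ q.ofLp), u'⟫ - χ u') := by
  classical
  refine ⟨WithLp.toLp 2 fun d => if q d ≤ p d then u d else u' d, fun d => ?_,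
    WithLp.toLp 2 fun d => if q d ≤ p d then u' d else u d, fun d => ?_, ?_⟩
  · dsimp only; split_ifs; exacts [hu d, hu' d]
  · dsimp only; split_ifs; exacts [hu' d, hu d]
  simp only [EuclideanSpace.real_inner_eq_sum, hχ, ← Finset.sum_sub_distrib,
    ← Finset.sum_add_distrib]
  refine Finset.sum_congr rfl fun d _ => ?_
  by_cases h : q d ≤ p d
  · simp [h]
  · simp only [h, ↓reduceIte, Pi.sup_apply, Pi.inf_apply, sup_of_le_right (le_of_not_ge h),
      inf_of_le_left (le_of_not_ge h)]
    ring

theorem exists_hopfDual_add_le (ht : 0 ≤ t)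
    (hsup : SupermodularOn (ξ ∘ WithLp.toLp 2) (Ici 0))
    (g : Fin D → ℝ → ℝ) (hχ : ∀ x, χ x = ∑ d, g d (x d))
    {x y z p q u u' : EuclideanSpace ℝ (Fin D)} (hy : y ∈ orthant D) (hz : z ∈ orthant D)
    (hp : p ∈ orthant D) (hq : q ∈ orthant D) (hu : u ∈ orthant D) (hu' : u' ∈ orthant D) :
    ∃ w₁ ∈ orthant D, ∃ w₂ ∈ orthant D,
      hopfDual D t ξ χ (x + y) p w₁ + hopfDual D t ξ χ (x + z) q w₂ ≤
        hopfDual D t ξ χ (x + y + z) (WithLp.toLp 2 (p.ofLp ⊔ q.ofLp)) u +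
          hopfDual D t ξ χ x (WithLp.toLp 2 (p.ofLp ⊓ q.ofLp)) u' := by
  obtain ⟨w₁, hw₁, w₂, hw₂, hswap⟩ := exists_rearrangement_of_separable g hχ p q hu hu'
  refine ⟨w₁, hw₁, w₂, hw₂, ?_⟩
  have hξ := mul_le_mul_of_nonneg_left (hsup (u := p.ofLp) (fun d => hp d) (fun d => hq d)) ht
  simp only [Function.comp_apply, WithLp.toLp_ofLp, mul_add] at hξ
  have := inner_add_inner_le_sup_add_inf (x := x) hy hz p q
  simp only [hopfDual]
  linarith

theorem hopfLax_add_le_of_supermodular (ht : 0 ≤ t) (hconv : ConvexOn ℝ (orthant D) ξ)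
    (hmono : MonotoneOn (ξ ∘ WithLp.toLp 2) (Ici 0))
    (hsup : SupermodularOn (ξ ∘ WithLp.toLp 2) (Ici 0))
    (lam : Fin D → ℝ) (χd : Fin D → ℝ → ℝ)
    (hlam : ∀ d, 0 ≤ lam d) (hlamsum : ∑ d, lam d = 1)
    (hχdconv : ∀ d, ConvexOn ℝ (Ici 0) (χd d)) (hχdlip : ∀ d, LipschitzOnWith 1 (χd d) (Ici 0))
    (hχdmono : ∀ d, MonotoneOn (χd d) (Ici 0)) (hχ : ∀ x, χ x = ∑ d, lam d * χd d (x d))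
    {x y z : EuclideanSpace ℝ (Fin D)} (hx : x ∈ orthant D) (hy : y ∈ orthant D)
    (hz : z ∈ orthant D) :
    hopfLax D t ξ χ (x + y) + hopfLax D t ξ χ (x + z) ≤
      hopfLax D t ξ χ (x + y + z) + hopfLax D t ξ χ x := by
  refine EReal.le_of_forall_pos_le_add_coe fun ε hε => EReal.add_le_of_forall_lt
    fun r hr r' hr' => ?_
  obtain ⟨⟨a, ha⟩, hra⟩ := lt_iSup_iff.1 hr
  obtain ⟨⟨b, hb⟩, hrb⟩ := lt_iSup_iff.1 hr'
  obtain ⟨p, hp, hpa⟩ := exists_approx_subgradient_of_separable lam χd hlam hlamsum hχdconv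
    hχdlip hχdmono hχ ha (half_pos hε)
  obtain ⟨q, hq, hqb⟩ := exists_approx_subgradient_of_separable lam χd hlam hlamsum hχdconv
    hχdlip hχdmono hχ hb (half_pos hε)
  obtain ⟨u, hu, hu_le⟩ := exists_hopfDual_le_hopfLax (χ := χ) ht hconv hmono
    (add_mem_orthant (add_mem_orthant hx hy) hz)
    (p := WithLp.toLp 2 (p.ofLp ⊔ q.ofLp)) fun d => le_sup_of_le_left (hp d)
  obtain ⟨u', hu', hu'_le⟩ := exists_hopfDual_le_hopfLax (χ := χ) ht hconv hmono hx
    (p := WithLp.toLp 2 (p.ofLp ⊓ q.ofLp)) fun d => le_inf (hp d) (hq d)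
  obtain ⟨w₁, hw₁, w₂, hw₂, hlattice⟩ := exists_hopfDual_add_le ht hsup
    (fun d s => lam d * χd d s) hχ hy hz hp hq hu hu'
  calc r + r' ≤ ((hopfDual D t ξ χ (x + y) p w₁ + ε / 2 : ℝ) : EReal) +
        ((hopfDual D t ξ χ (x + z) q w₂ + ε / 2 : ℝ) : EReal) :=
        add_le_add (hra.le.trans (hopfLax_term_le_hopfDual hp (hpa w₁ hw₁)))
          (hrb.le.trans (hopfLax_term_le_hopfDual hq (hqb w₂ hw₂)))
    _ ≤ (hopfDual D t ξ χ (x + y + z) (WithLp.toLp 2 (p.ofLp ⊔ q.ofLp)) u : EReal) +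
        (hopfDual D t ξ χ x (WithLp.toLp 2 (p.ofLp ⊓ q.ofLp)) u' : EReal) + (ε : EReal) := by
        norm_cast
        linarith
    _ ≤ hopfLax D t ξ χ (x + y + z) + hopfLax D t ξ χ x + ε := by
        gcongr

end HopfLax

theorem hopfLax_orthantConvex_general (D : ℕ)
    (c : (Fin D → ℕ) → ℝ) (hc : ∀ α, 0 ≤ c α)
    (ξ : EuclideanSpace ℝ (Fin D) → ℝ)
    (habs : ∀ x : EuclideanSpace ℝ (Fin D),
      Summable (fun α : Fin D → ℕ => |c α * ∏ i, x i ^ α i|))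
    (hξ : ∀ x : EuclideanSpace ℝ (Fin D),
      ξ x = ∑' α : Fin D → ℕ, c α * ∏ i, x i ^ α i)
    (hconv : ConvexOn ℝ (orthant D) ξ)
    (lam : Fin D → ℝ) (hlam : ∀ d, lam d ∈ Set.Ioo (0 : ℝ) 1) (hlamsum : ∑ d, lam d = 1)
    (χd : Fin D → ℝ → ℝ)
    (hχdconv : ∀ d, ConvexOn ℝ (Set.Ici (0 : ℝ)) (χd d))
    (hχdlip : ∀ d, LipschitzOnWith 1 (χd d) (Set.Ici (0 : ℝ)))
    (hχdmono : ∀ d, MonotoneOn (χd d) (Set.Ici (0 : ℝ)))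
    (χ : EuclideanSpace ℝ (Fin D) → ℝ)
    (hχ : ∀ x : EuclideanSpace ℝ (Fin D), χ x = ∑ d, lam d * χd d (x d))
    (t : ℝ) (ht : 0 ≤ t) :
    ∀ x ∈ orthant D, ∀ y ∈ orthant D, ∀ z ∈ orthant D,
      hopfLax D t ξ χ (x + y) + hopfLax D t ξ χ (x + z) ≤
        hopfLax D t ξ χ (x + y + z) + hopfLax D t ξ χ x := by
  intro x hx y hy z hz
  have hsum (u : Fin D → ℝ) : Summable fun α => c α * ∏ i, u i ^ α i :=
    (habs (WithLp.toLp 2 u)).of_abs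
  have hξ' : ξ ∘ WithLp.toLp 2 = fun u => ∑' α, c α * ∏ i, u i ^ α i := funext fun u => hξ _
  exact hopfLax_add_le_of_supermodular ht hconv (hξ' ▸ monotoneOn_tsum_monomial hc hsum)
    (hξ' ▸ supermodularOn_tsum_monomial hc hsum) lam χd (fun d => (hlam d).1.le) hlamsum
    hχdconv hχdlip hχdmono hχ hx hy hz

/-- if `ξ` is given by an absolutely convergent power series with nonnegative
coefficients, `ξ(0) = 0`, and `ξ` is convex on `ℝ_+^D`, then for every `χ ∈ 𝔛` and `t ≥ 0`,
the function `S_tχ` is `ℝ_+^D`-convex, i.e.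
`S_tχ(x+y+z) − S_tχ(x+z) ≥ S_tχ(x+y) − S_tχ(x)` for all `x, y, z ∈ ℝ_+^D`
(stated in the equivalent additive form, valid in `EReal`). -/
theorem hopfLax_orthantConvex (D : ℕ) (hD : 1 ≤ D)
    (c : (Fin D → ℕ) → ℝ) (hc : ∀ α, 0 ≤ c α)
    (ξ : EuclideanSpace ℝ (Fin D) → ℝ)
    (habs : ∀ x : EuclideanSpace ℝ (Fin D),
      Summable (fun α : Fin D → ℕ => |c α * ∏ i, x i ^ α i|))
    (hξ : ∀ x : EuclideanSpace ℝ (Fin D),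
      ξ x = ∑' α : Fin D → ℕ, c α * ∏ i, x i ^ α i)
    (hξ0 : ξ 0 = 0)
    (hconv : ConvexOn ℝ (orthant D) ξ)
    (lam : Fin D → ℝ) (hlam : ∀ d, lam d ∈ Set.Ioo (0 : ℝ) 1) (hlamsum : ∑ d, lam d = 1)
    (χd : Fin D → ℝ → ℝ)
    (hχd0 : ∀ d, χd d 0 = 0)
    (hχdconv : ∀ d, ConvexOn ℝ (Set.Ici (0 : ℝ)) (χd d))
    (hχdlip : ∀ d, LipschitzOnWith 1 (χd d) (Set.Ici (0 : ℝ)))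
    (hχdmono : ∀ d, MonotoneOn (χd d) (Set.Ici (0 : ℝ)))
    (χ : EuclideanSpace ℝ (Fin D) → ℝ)
    (hχ : ∀ x : EuclideanSpace ℝ (Fin D), χ x = ∑ d, lam d * χd d (x d))
    (t : ℝ) (ht : 0 ≤ t) :
    ∀ x ∈ orthant D, ∀ y ∈ orthant D, ∀ z ∈ orthant D,
      hopfLax D t ξ χ (x + y) + hopfLax D t ξ χ (x + z) ≤
        hopfLax D t ξ χ (x + y + z) + hopfLax D t ξ χ x :=
  hopfLax_orthantConvex_general D c hc ξ habs hξ hconv lam hlam hlamsum χd hχdconv hχdlip hχdmono χ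
    hχ t ht
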